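/- For every integer n ≥ 2, the function (t_1,…,t_n) ↦ 1/((1−t_1)·t_2·t_3⋯t_n) is Lebesgue integrable on the open simplex Δ_n = {(t_1,…,t_n) ∈ ℝ^n : 0 < t_1 < t_2 < ⋯ < t_n < 1}, and its integral over Δ_n equals ζ(n) = Σ_{k=1}^∞ k^{−n}. (Leibniz's formula presenting ζ(n) as a length n iterated integral ∫_{0<t_1<⋯<t_n<1} dt_1/(1−t_1) ∧ dt_2/t_2 ∧ ⋯ ∧ dt_n/t_n.) -/

import Mathlib

/-!
On the simplex `0 < t₁ < 1`, so `1/((1 - t₁) t₂⋯tₙ) = ∑ₖ t₁ᵏ/(t₂⋯tₙ)` is a series of nonnegative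
terms and, by monotone convergence, may be integrated term by term. Integrating out the largest
variable last gives by induction on the dimension
`∫_{0<t₁<⋯<tₙ<b} t₁ᵏ/(t₂⋯tₙ) = b^(k+1)/(k+1)ⁿ`: the integral over the first `n - 1` variables is
`tₙ^(k+1)/(k+1)^(n-1)`, which is divided by `tₙ` and integrated over `(0, b)`.
At `b = 1` the terms sum to `∑ₖ 1/(k+1)ⁿ`.
-/

open MeasureTheory Set
open scoped ENNReal

lemma lintegral_eq_lintegral_lintegral_snoc {α : Type*} [MeasureSpace α]
    [SigmaFinite (volume : Measure α)] {n : ℕ} {f : (Fin (n + 1) → α) → ℝ≥0∞}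
    (hf : Measurable f) :
    ∫⁻ t, f t = ∫⁻ s, ∫⁻ u, f (Fin.snoc u s) := by
  have he := (volume_preserving_piFinSuccAbove (fun _ : Fin (n + 1) => α) (Fin.last n)).symm
  rw [← he.lintegral_comp hf, Measure.volume_eq_prod, lintegral_prod]
  · simp [MeasurableEquiv.piFinSuccAbove_symm_apply, Fin.snocEquiv]
  · exact (hf.comp (MeasurableEquiv.measurable _)).aemeasurable

lemma setLIntegral_Ioo_pow (k : ℕ) {b : ℝ} (hb : 0 ≤ b) :
    ∫⁻ s in Ioo 0 b, ENNReal.ofReal (s ^ k) = ENNReal.ofReal (b ^ (k + 1) / (k + 1)) := by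
  rw [← ofReal_integral_eq_lintegral_ofReal, ← integral_Ioc_eq_integral_Ioo,
    ← intervalIntegral.integral_of_le hb, integral_pow]
  · simp
  · exact (continuous_pow k).integrableOn_Icc.mono_set Ioo_subset_Icc_self
  · filter_upwards [ae_restrict_mem measurableSet_Ioo] with s hs
    exact pow_nonneg hs.1.le k

lemma Fin.prod_univ_erase_zero {M : Type*} [CommMonoid M] {n : ℕ} (f : Fin (n + 1) → M) :
    ∏ i ∈ Finset.univ.erase 0, f i = ∏ i : Fin n, f i.succ := by
  rw [← Finset.compl_singleton, ← Fin.image_succ_univ,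
    Finset.prod_image fun _ _ _ _ h => Fin.succ_injective _ h]

lemma integrable_and_integral_eq_of_lintegral_ofReal_eq {α : Type*} [MeasurableSpace α]
    {μ : Measure α} {f : α → ℝ} {c : ℝ} (hf : AEStronglyMeasurable f μ) (h0 : 0 ≤ᵐ[μ] f)
    (hc : 0 ≤ c) (h : ∫⁻ x, ENNReal.ofReal (f x) ∂μ = ENNReal.ofReal c) :
    Integrable f μ ∧ ∫ x, f x ∂μ = c :=
  ⟨⟨hf, (hasFiniteIntegral_iff_ofReal h0).2 (h ▸ ENNReal.ofReal_lt_top)⟩, by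
    rw [integral_eq_lintegral_of_nonneg_ae h0 hf, h, ENNReal.toReal_ofReal hc]⟩

-- The paper's `Δ_{n+1}`, with upper bound `b` instead of `1` and coordinates indexed from `0`.
def openSimplex (n : ℕ) (b : ℝ) : Set (Fin (n + 1) → ℝ) :=
  {t | StrictMono t ∧ 0 < t 0 ∧ t (Fin.last n) < b}

noncomputable def leibnizTerm (n k : ℕ) (t : Fin (n + 1) → ℝ) : ℝ :=
  t 0 ^ k / ∏ i : Fin n, t i.succ

namespace openSimplex

variable {n : ℕ} {b : ℝ}

lemma isOpen : IsOpen (openSimplex n b) := by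
  simp only [openSimplex, Fin.strictMono_iff_lt_succ, ofPred_and, ofPred_forall]
  exact (isOpen_iInter_of_finite fun i : Fin n =>
    isOpen_lt (continuous_apply i.castSucc) (continuous_apply i.succ)).inter
    ((isOpen_lt continuous_const (continuous_apply 0)).inter
      (isOpen_lt (continuous_apply _) continuous_const))

lemma measurableSet : MeasurableSet (openSimplex n b) := isOpen.measurableSet

lemma pos {t : Fin (n + 1) → ℝ} (ht : t ∈ openSimplex n b) (i : Fin (n + 1)) : 0 < t i :=
  ht.2.1.trans_le (ht.1.monotone (Fin.zero_le i))

lemma lt {t : Fin (n + 1) → ℝ} (ht : t ∈ openSimplex n b) (i : Fin (n + 1)) : t i < b :=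
  (ht.1.monotone (Fin.le_last i)).trans_lt ht.2.2

lemma snoc_mem_iff {u : Fin (n + 1) → ℝ} {s : ℝ} :
    (Fin.snoc u s : Fin (n + 2) → ℝ) ∈ openSimplex (n + 1) b ↔ u ∈ openSimplex n s ∧ s < b := by
  simp only [openSimplex, mem_ofPred_eq, Fin.strictMono_iff_lt_succ, Fin.forall_fin_succ',
    Fin.succ_castSucc, Fin.snoc_castSucc, Fin.succ_last, Fin.snoc_last, Fin.snoc_apply_zero]
  tauto

end openSimplex

lemma measurable_leibnizTerm (n k : ℕ) : Measurable (leibnizTerm n k) := by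
  unfold leibnizTerm; fun_prop

lemma leibnizTerm_snoc (n k : ℕ) (u : Fin (n + 1) → ℝ) (s : ℝ) :
    leibnizTerm (n + 1) k (Fin.snoc u s) = leibnizTerm n k u / s := by
  simp only [leibnizTerm, Fin.prod_univ_castSucc, Fin.succ_castSucc, Fin.snoc_castSucc,
    Fin.succ_last, Fin.snoc_last, Fin.snoc_apply_zero, div_div]

lemma leibnizTerm_nonneg {n k : ℕ} {b : ℝ} {t : Fin (n + 1) → ℝ} (ht : t ∈ openSimplex n b) :
    0 ≤ leibnizTerm n k t :=
  div_nonneg (pow_nonneg (openSimplex.pos ht 0).le k)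
    (Finset.prod_nonneg fun _ _ => (openSimplex.pos ht _).le)

lemma hasSum_leibnizTerm {n : ℕ} {t : Fin (n + 1) → ℝ} (ht : t ∈ openSimplex n 1) :
    HasSum (fun k => leibnizTerm n k t) ((1 - t 0)⁻¹ / ∏ i : Fin n, t i.succ) :=
  (hasSum_geometric_of_lt_one (openSimplex.pos ht 0).le (openSimplex.lt ht 0)).div_const _

lemma lintegral_indicator_openSimplex_snoc (n k : ℕ) (b s : ℝ) :
    ∫⁻ u, (openSimplex (n + 1) b).indicator
        (fun t => ENNReal.ofReal (leibnizTerm (n + 1) k t)) (Fin.snoc u s) =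
      (Ioo 0 b).indicator
        (fun s => ENNReal.ofReal s⁻¹ *
          ∫⁻ u in openSimplex n s, ENNReal.ofReal (leibnizTerm n k u)) s := by
  by_cases hs : s ∈ Ioo 0 b
  · rw [indicator_of_mem hs, ← lintegral_const_mul _ (measurable_leibnizTerm n k).ennreal_ofReal,
      ← lintegral_indicator openSimplex.measurableSet]
    congr 1 with u
    by_cases hu : u ∈ openSimplex n s
    · rw [indicator_of_mem (openSimplex.snoc_mem_iff.2 ⟨hu, hs.2⟩), indicator_of_mem hu,
        leibnizTerm_snoc, div_eq_inv_mul, ENNReal.ofReal_mul (inv_nonneg.2 hs.1.le)]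
    · rw [indicator_of_notMem (fun h => hu (openSimplex.snoc_mem_iff.1 h).1),
        indicator_of_notMem hu]
  · rw [indicator_of_notMem hs, ← lintegral_zero]
    congr 1 with u
    refine indicator_of_notMem (fun h => hs ?_) _
    obtain ⟨hu, hsb⟩ := openSimplex.snoc_mem_iff.1 h
    exact ⟨(openSimplex.pos hu 0).trans (openSimplex.lt hu 0), hsb⟩

theorem lintegral_leibnizTerm_openSimplex (n k : ℕ) {b : ℝ} (hb : 0 < b) :
    ∫⁻ t in openSimplex n b, ENNReal.ofReal (leibnizTerm n k t) =
      ENNReal.ofReal (b ^ (k + 1) / (k + 1) ^ (n + 1)) := by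
  induction n generalizing b with
  | zero =>
    have hset : openSimplex 0 b = MeasurableEquiv.funUnique (Fin 1) ℝ ⁻¹' Ioo 0 b := by
      ext t
      simp [openSimplex, Subsingleton.strictMono]
    have hterm (t : Fin 1 → ℝ) :
        leibnizTerm 0 k t = MeasurableEquiv.funUnique (Fin 1) ℝ t ^ k := by
      simp [leibnizTerm]
    simp only [hset, hterm, zero_add, pow_one]
    exact ((volume_preserving_funUnique (Fin 1) ℝ).setLIntegral_comp_preimage_emb
      (MeasurableEquiv.measurableEmbedding _) (fun x => ENNReal.ofReal (x ^ k)) _).trans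
      (setLIntegral_Ioo_pow k hb.le)
  | succ n ih =>
    calc ∫⁻ t in openSimplex (n + 1) b, ENNReal.ofReal (leibnizTerm (n + 1) k t)
        = ∫⁻ s in Ioo 0 b, ENNReal.ofReal s⁻¹ *
            ∫⁻ u in openSimplex n s, ENNReal.ofReal (leibnizTerm n k u) := by
          rw [← lintegral_indicator openSimplex.measurableSet,
            lintegral_eq_lintegral_lintegral_snoc
              ((measurable_leibnizTerm _ k).ennreal_ofReal.indicator openSimplex.measurableSet),
            ← lintegral_indicator measurableSet_Ioo]
          simp_rw [lintegral_indicator_openSimplex_snoc]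
      _ = ∫⁻ s in Ioo 0 b, ENNReal.ofReal (s ^ k) * ENNReal.ofReal (((k + 1) ^ (n + 1))⁻¹) := by
          refine setLIntegral_congr_fun measurableSet_Ioo fun s hs => ?_
          rw [ih hs.1, ← ENNReal.ofReal_mul (inv_nonneg.2 hs.1.le),
            ← ENNReal.ofReal_mul (pow_nonneg hs.1.le k)]
          congr 1
          have := hs.1.ne'
          field_simp
          ring
      _ = ENNReal.ofReal (b ^ (k + 1) / (k + 1) ^ (n + 1 + 1)) := by
          rw [lintegral_mul_const' _ _ ENNReal.ofReal_ne_top,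
            setLIntegral_Ioo_pow k hb.le, ← ENNReal.ofReal_mul (by positivity)]
          congr 1
          field_simp
          ring

theorem lintegral_openSimplex_eq_tsum (n : ℕ) :
    ∫⁻ t in openSimplex n 1, ENNReal.ofReal ((1 - t 0)⁻¹ / ∏ i : Fin n, t i.succ) =
      ∑' k : ℕ, ENNReal.ofReal (1 / (k + 1) ^ (n + 1)) :=
  calc _ = ∫⁻ t in openSimplex n 1, ∑' k, ENNReal.ofReal (leibnizTerm n k t) :=
        setLIntegral_congr_fun openSimplex.measurableSet fun t ht => by
          rw [← (hasSum_leibnizTerm ht).tsum_eq,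
            ENNReal.ofReal_tsum_of_nonneg (fun _ => leibnizTerm_nonneg ht)
              (hasSum_leibnizTerm ht).summable]
    _ = ∑' k, ∫⁻ t in openSimplex n 1, ENNReal.ofReal (leibnizTerm n k t) :=
        lintegral_tsum fun k => (measurable_leibnizTerm n k).ennreal_ofReal.aemeasurable
    _ = _ := by simp only [lintegral_leibnizTerm_openSimplex n _ one_pos, one_pow]

theorem statement_0 (n : ℕ) (hn : 2 ≤ n) :
    IntegrableOn
      (fun t : Fin n → ℝ =>
        ((1 - t ⟨0, by omega⟩) * ∏ i ∈ Finset.univ.erase (⟨0, by omega⟩ : Fin n), t i)⁻¹)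
      {t : Fin n → ℝ | StrictMono t ∧ 0 < t ⟨0, by omega⟩ ∧ t ⟨n - 1, by omega⟩ < 1}
      volume ∧
    ∫ t in {t : Fin n → ℝ | StrictMono t ∧ 0 < t ⟨0, by omega⟩ ∧ t ⟨n - 1, by omega⟩ < 1},
        ((1 - t ⟨0, by omega⟩) * ∏ i ∈ Finset.univ.erase (⟨0, by omega⟩ : Fin n), t i)⁻¹
      = ∑' k : ℕ, (1 : ℝ) / ((k : ℝ) + 1) ^ n := by
  obtain ⟨m, rfl⟩ : ∃ m, n = m + 2 := ⟨n - 2, by omega⟩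
  have hintegrand : (fun t : Fin (m + 2) → ℝ =>
      ((1 - t ⟨0, by omega⟩) * ∏ i ∈ Finset.univ.erase ⟨0, by omega⟩, t i)⁻¹) =
      fun t => (1 - t 0)⁻¹ / ∏ i : Fin (m + 1), t i.succ := by
    funext t
    rw [← Fin.prod_univ_erase_zero, mul_inv, div_eq_mul_inv]
    rfl
  have hsummable : Summable fun k : ℕ => (1 : ℝ) / ((k : ℝ) + 1) ^ (m + 2) := by
    simpa using
      (summable_nat_add_iff 1).2 (Real.summable_one_div_nat_pow.2 (by omega : 1 < m + 2))
  change IntegrableOn _ (openSimplex (m + 1) 1) volume ∧ ∫ t in openSimplex (m + 1) 1, _ = _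
  rw [hintegrand]
  refine integrable_and_integral_eq_of_lintegral_ofReal_eq
    (by fun_prop : Measurable _).aestronglyMeasurable ?_
    (tsum_nonneg fun _ => by positivity) ?_
  · filter_upwards [ae_restrict_mem openSimplex.measurableSet] with t ht
    exact (hasSum_leibnizTerm ht).nonneg fun _ => leibnizTerm_nonneg ht
  · rw [lintegral_openSimplex_eq_tsum,
      ENNReal.ofReal_tsum_of_nonneg (fun _ => by positivity) hsummable]
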